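/- arXiv:2309.03797 — 2 statements merged into one kernel-verified Lean document; each statement's English description precedes it below -/
import Mathlib

section
/- Let E be a measurable space, let X₁,…,X_{N₀}, X_{N₀+1} be independent, identically distributed E-valued random variables with common law μ, fix α ∈ (0,1) and L a positive integer, and let σ₁,…,σ_L : E → ℝ be measurable score functions such that for each l the pushforward of μ under σ_l is atomless. Define recursively k_l = ⌊α(N_{l−1}+1)⌋ and N_l = N_{l−1} − k_l for l = 1,…,L, and define thresholds iteratively: W₀ = {1,…,N₀}; for l = 1,…,L, if k_l ≥ 1 let t_l be the k_l-th smallest value among {σ_l(X_i) : i ∈ W_{l−1}} and let W_l be W_{l−1} with the k_l indices attaining those smallest values removed (almost surely well-defined since ties have probability zero), and if k_l = 0 set t_l = −∞ and W_l = W_{l−1}. Then P( σ_l(X_{N₀+1}) ≥ t_l for all l = 1,…,L ) ≥ (1−α)^L. -/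
open MeasureTheory ProbabilityTheory Finset

noncomputable section

/-- The `k`-th smallest value (1-indexed) attained by `f` on the finite index set `s`
(counted with multiplicity). -/
def kthSmallestVal {ι : Type*} (s : Finset ι) (f : ι → ℝ) (k : ℕ) : ℝ :=
  ((s.val.map f).sort (· ≤ ·)).getD (k - 1) 0

/-- Remove from `s` the `k` indices attaining the smallest values of `f`
(ties, which are almost surely absent, broken by the index order). -/
def removeKSmallest {ι : Type*} [LinearOrder ι] (s : Finset ι) (f : ι → ℝ) (k : ℕ) : Finset ι :=
  s.filter (fun i => k < (s.filter (fun j => f j < f i ∨ (f j = f i ∧ j ≤ i))).card)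

/-- The iteratively pruned index sets: `W_0` is everything, and `W_l` is `W_{l-1}` with the
`k_l` indices attaining the smallest values of `f l` removed. -/
def pruneSeq {ι : Type*} [LinearOrder ι] [Fintype ι] (f : ℕ → ι → ℝ) (k : ℕ → ℕ) :
    ℕ → Finset ι
  | 0 => Finset.univ
  | l + 1 => removeKSmallest (pruneSeq f k l) (f (l + 1)) (k (l + 1))

/-- The sequence `N_l` of remaining calibration sample sizes:
`N_0 = N₀` and `N_l = N_{l-1} - ⌊α (N_{l-1}+1)⌋`. -/
def conformalN (α : ℝ) (N0 : ℕ) : ℕ → ℕ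
  | 0 => N0
  | l + 1 => conformalN α N0 l - ⌊α * (conformalN α N0 l + 1)⌋₊

/-- The number of samples removed at step `l ≥ 1`: `k_l = ⌊α (N_{l-1}+1)⌋`. -/
def conformalK (α : ℝ) (N0 : ℕ) (l : ℕ) : ℕ := ⌊α * (conformalN α N0 (l - 1) + 1)⌋₊

/-!
Run the pruning on all `N₀ + 1` points, the test point included. Almost surely there are no
ties among the scores, and then the test point survives the `L` steps exactly when it clears every
threshold computed from the calibration points alone: a point lying above the `k`-th smallest
value does not change which `k` of the other points are removed. Each step removes a
deterministic number of points, so exactly `N_L + 1` points survive. The points are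
exchangeable, hence each survives with the same probability, namely
`(N_L + 1) / (N₀ + 1) ≥ (1 - α) ^ L`.
-/

theorem List.Pairwise.getElem_lt_iff_lt_countP {l : List ℝ} (hl : l.Pairwise (· ≤ ·)) {x : ℝ}
    {k : ℕ} (hk : k < l.length) : l[k] < x ↔ k < l.countP (· < x) := by
  induction l generalizing k with
  | nil => simp at hk
  | cons a l ih =>
    rw [List.pairwise_cons] at hl
    by_cases hax : a < x
    · cases k with
      | zero => simp [hax]
      | succ k => simpa [List.countP_cons, hax] using ih hl.2 (by simpa using hk)
    · have hmin : ∀ b ∈ a :: l, x ≤ b := by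
        simp only [List.mem_cons, forall_eq_or_imp]
        exact ⟨not_lt.1 hax, fun b hb => (not_lt.1 hax).trans (hl.1 b hb)⟩
      rw [List.countP_eq_zero.2 fun b hb => by simpa using hmin b hb]
      simpa using hmin _ (List.getElem_mem hk)

section OrderStatistic

variable {ι : Type*} {s : Finset ι} {f : ι → ℝ} {k : ℕ}

theorem kthSmallestVal_lt_iff (hk : 1 ≤ k) (hks : k ≤ s.card) {x : ℝ} :
    kthSmallestVal s f k < x ↔ k ≤ (s.filter (f · < x)).card := by
  have hlen : k - 1 < ((s.val.map f).sort (· ≤ ·)).length := by simp; omega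
  rw [kthSmallestVal, List.getD_eq_getElem _ _ hlen,
    (Multiset.pairwise_sort _ _).getElem_lt_iff_lt_countP hlen]
  have : ((s.val.map f).sort (· ≤ ·)).countP (· < x) = (s.filter (f · < x)).card := by
    rw [← Multiset.coe_countP, Multiset.sort_eq, Multiset.countP_map]
    rfl
  omega

theorem kthSmallestVal_mem_image (hk : 1 ≤ k) (hks : k ≤ s.card) :
    ∃ i ∈ s, f i = kthSmallestVal s f k := by
  have hlen : k - 1 < ((s.val.map f).sort (· ≤ ·)).length := by simp; omega
  have := List.getElem_mem hlen
  rw [Multiset.mem_sort, Multiset.mem_map] at this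
  rwa [kthSmallestVal, List.getD_eq_getElem _ _ hlen]

lemma kthSmallestVal_ne {a : ι} (hf : Function.Injective f) (ha : a ∉ s) (hk : 1 ≤ k)
    (hks : k ≤ s.card) : kthSmallestVal s f k ≠ f a := by
  obtain ⟨i, hi, hfi⟩ := kthSmallestVal_mem_image (f := f) hk hks
  rw [← hfi]
  exact hf.ne (ne_of_mem_of_not_mem hi ha)

lemma kthSmallestVal_map {ι' : Type*} (e : ι' ↪ ι) (s : Finset ι') (f : ι → ℝ) (k : ℕ) :
    kthSmallestVal (s.map e) f k = kthSmallestVal s (f ∘ e) k := by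
  rw [kthSmallestVal, kthSmallestVal, Finset.map_val, Multiset.map_map]

end OrderStatistic

theorem Finset.card_filter_lt_card_filter_le {β : Type*} [LinearOrder β] (s : Finset β) (k : ℕ) :
    (s.filter fun x => k < (s.filter (· ≤ x)).card).card = s.card - k := by
  induction s using Finset.induction_on_max with
  | empty => simp
  | insert a s hlt ih =>
    have ha : a ∉ s := fun h => lt_irrefl a (hlt a h)
    have hrank : ∀ x ∈ s, (insert a s).filter (· ≤ x) = s.filter (· ≤ x) := fun x hx => by
      rw [Finset.filter_insert, if_neg (not_le.2 (hlt x hx))]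
    have htop : (insert a s).filter (· ≤ a) = insert a s :=
      Finset.filter_true_of_mem fun x hx => by
        rcases Finset.mem_insert.1 hx with rfl | hx
        exacts [le_rfl, (hlt x hx).le]
    rw [Finset.filter_insert, htop, Finset.filter_congr fun x hx => by rw [hrank x hx],
      Finset.card_insert_of_notMem ha]
    split_ifs with hk
    · rw [Finset.card_insert_of_notMem fun h => ha (Finset.mem_filter.1 h).1, ih]
      omega
    · omega

section RemoveKSmallest

variable {ι ι' : Type*} [LinearOrder ι] [LinearOrder ι'] {f : ι → ℝ} {k : ℕ}

lemma removeKSmallest_eq_filter_lex (s : Finset ι) (f : ι → ℝ) (k : ℕ) :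
    removeKSmallest s f k = s.filter fun i =>
      k < (s.filter fun j => toLex (f j, j) ≤ toLex (f i, i)).card := by
  simp only [removeKSmallest, Prod.Lex.toLex_le_toLex]

theorem card_removeKSmallest (s : Finset ι) (f : ι → ℝ) (k : ℕ) :
    (removeKSmallest s f k).card = s.card - k := by
  -- ties are broken by the index, so the ranking key is injective
  let g : ι ↪ ℝ ×ₗ ι := ⟨fun i => toLex (f i, i), fun i j h => congrArg (fun p => (ofLex p).2) h⟩
  have h := (s.map g).card_filter_lt_card_filter_le k
  simp only [Finset.filter_map, Finset.card_map] at h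
  rw [removeKSmallest_eq_filter_lex]
  exact h

lemma removeKSmallest_subset (s : Finset ι) (f : ι → ℝ) (k : ℕ) : removeKSmallest s f k ⊆ s :=
  Finset.filter_subset _ _

lemma removeKSmallest_zero (s : Finset ι) (f : ι → ℝ) : removeKSmallest s f 0 = s :=
  Finset.filter_true_of_mem fun i hi => Finset.card_pos.2 ⟨i, by simp [hi]⟩

lemma removeKSmallest_eq_filter (hf : Function.Injective f) (s : Finset ι) :
    removeKSmallest s f k = s.filter fun i => k ≤ (s.filter (f · < f i)).card := by
  refine Finset.filter_congr fun i hi => ?_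
  have : s.filter (fun j => f j < f i ∨ (f j = f i ∧ j ≤ i)) = insert i (s.filter (f · < f i)) := by
    ext j
    simp only [Finset.mem_filter, Finset.mem_insert]
    constructor
    · rintro ⟨hj, h | ⟨h, -⟩⟩
      exacts [Or.inr ⟨hj, h⟩, Or.inl (hf h)]
    · rintro (rfl | ⟨hj, h⟩)
      exacts [⟨hi, Or.inr ⟨rfl, le_rfl⟩⟩, ⟨hj, Or.inl h⟩]
  rw [this, Finset.card_insert_of_notMem (by simp), Nat.lt_succ_iff]

lemma removeKSmallest_map (hf : Function.Injective f) (e : ι' ↪ ι) (s : Finset ι') :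
    removeKSmallest (s.map e) f k = (removeKSmallest s (f ∘ e) k).map e := by
  rw [removeKSmallest_eq_filter hf, removeKSmallest_eq_filter (hf.comp e.injective),
    Finset.filter_map]
  congr 1
  refine Finset.filter_congr fun i _ => ?_
  simp only [Function.comp_apply, Finset.filter_map, Finset.card_map]

end RemoveKSmallest

section Insert

variable {ι : Type*} [LinearOrder ι] {s : Finset ι} {f : ι → ℝ} {k : ℕ} {a : ι}

lemma mem_removeKSmallest_insert_iff (hf : Function.Injective f) (ha : a ∉ s) (hk : 1 ≤ k)
    (hks : k ≤ s.card) : a ∈ removeKSmallest (insert a s) f k ↔ kthSmallestVal s f k ≤ f a := by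
  rw [removeKSmallest_eq_filter hf, Finset.mem_filter, Finset.filter_insert, if_neg (lt_irrefl _),
    ← kthSmallestVal_lt_iff hk hks, lt_iff_le_and_ne, and_iff_left (kthSmallestVal_ne hf ha hk hks)]
  simp

lemma removeKSmallest_insert (hf : Function.Injective f) (ha : a ∉ s) (hk : 1 ≤ k)
    (hks : k ≤ s.card) (hpass : kthSmallestVal s f k ≤ f a) :
    removeKSmallest (insert a s) f k = insert a (removeKSmallest s f k) := by
  have hlt : kthSmallestVal s f k < f a := hpass.lt_of_ne (kthSmallestVal_ne hf ha hk hks)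
  ext i
  rcases eq_or_ne i a with rfl | hia
  · simp [mem_removeKSmallest_insert_iff hf ha hk hks, hpass]
  simp only [removeKSmallest_eq_filter hf, Finset.mem_filter, Finset.mem_insert, hia, false_or,
    and_congr_right_iff]
  intro _
  by_cases hai : f a < f i
  · have hs : k ≤ (s.filter (f · < f i)).card := (kthSmallestVal_lt_iff hk hks).1 (hlt.trans hai)
    exact iff_of_true (hs.trans (Finset.card_le_card
      (Finset.filter_subset_filter _ (Finset.subset_insert _ _)))) hs
  · rw [Finset.filter_insert, if_neg hai]

end Insert

section Pruning

variable {ι ι' : Type*} [LinearOrder ι] [LinearOrder ι']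

def pruneFrom (s : Finset ι) (f : ℕ → ι → ℝ) (k : ℕ → ℕ) : ℕ → Finset ι
  | 0 => s
  | l + 1 => removeKSmallest (pruneFrom s f k l) (f (l + 1)) (k (l + 1))

variable {s : Finset ι} {f : ℕ → ι → ℝ} {k : ℕ → ℕ} {l : ℕ}

lemma pruneSeq_eq_pruneFrom [Fintype ι] (f : ℕ → ι → ℝ) (k : ℕ → ℕ) :
    pruneSeq f k = pruneFrom Finset.univ f k := by
  funext l
  induction l with
  | zero => rfl
  | succ l ih => rw [pruneSeq, ih, pruneFrom]

lemma pruneFrom_subset (s : Finset ι) (f : ℕ → ι → ℝ) (k : ℕ → ℕ) (l : ℕ) :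
    pruneFrom s f k l ⊆ s := by
  induction l with
  | zero => exact subset_rfl
  | succ l ih => exact (removeKSmallest_subset _ _ _).trans ih

lemma card_pruneFrom {N : ℕ → ℕ} (h0 : s.card = N 0) (hN : ∀ m, N (m + 1) = N m - k (m + 1)) :
    (pruneFrom s f k l).card = N l := by
  induction l with
  | zero => exact h0
  | succ l ih => rw [pruneFrom, card_removeKSmallest, ih, hN]

lemma pruneFrom_map (e : ι' ↪ ι) (s : Finset ι') (hf : ∀ m < l, Function.Injective (f (m + 1))) :
    pruneFrom (s.map e) f k l = (pruneFrom s (fun m => f m ∘ e) k l).map e := by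
  induction l with
  | zero => rfl
  | succ l ih =>
    rw [Nat.forall_lt_succ_right] at hf
    rw [pruneFrom, ih hf.1, removeKSmallest_map hf.2]
    rfl

variable {a : ι}

lemma pruneFrom_insert (ha : a ∉ s) (hf : ∀ m < l, Function.Injective (f (m + 1)))
    (hk : ∀ m < l, k (m + 1) ≤ (pruneFrom s f k m).card)
    (hpass : ∀ m < l, k (m + 1) = 0 ∨ kthSmallestVal (pruneFrom s f k m) (f (m + 1)) (k (m + 1))
      ≤ f (m + 1) a) :
    pruneFrom (insert a s) f k l = insert a (pruneFrom s f k l) := by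
  induction l with
  | zero => rfl
  | succ l ih =>
    rw [Nat.forall_lt_succ_right] at hf hk hpass
    rw [pruneFrom, pruneFrom, ih hf.1 hk.1 hpass.1]
    by_cases hk0 : k (l + 1) = 0
    · rw [hk0, removeKSmallest_zero, removeKSmallest_zero]
    · exact removeKSmallest_insert hf.2 (fun h => ha (pruneFrom_subset _ _ _ _ h))
        (Nat.one_le_iff_ne_zero.2 hk0) hk.2 (hpass.2.resolve_left hk0)

lemma mem_pruneFrom_insert_iff (ha : a ∉ s) (hf : ∀ m < l, Function.Injective (f (m + 1)))
    (hk : ∀ m < l, k (m + 1) ≤ (pruneFrom s f k m).card) :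
    a ∈ pruneFrom (insert a s) f k l ↔ ∀ m < l, k (m + 1) = 0 ∨
      kthSmallestVal (pruneFrom s f k m) (f (m + 1)) (k (m + 1)) ≤ f (m + 1) a := by
  induction l with
  | zero => simp [pruneFrom]
  | succ l ih =>
    rw [Nat.forall_lt_succ_right] at hf hk ⊢
    by_cases hprev : ∀ m < l, k (m + 1) = 0 ∨
        kthSmallestVal (pruneFrom s f k m) (f (m + 1)) (k (m + 1)) ≤ f (m + 1) a
    · rw [pruneFrom, pruneFrom_insert ha hf.1 hk.1 hprev]
      by_cases hk0 : k (l + 1) = 0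
      · rw [hk0, removeKSmallest_zero]
        exact iff_of_true (Finset.mem_insert_self _ _) ⟨hprev, Or.inl rfl⟩
      · rw [mem_removeKSmallest_insert_iff hf.2 (fun h => ha (pruneFrom_subset _ _ _ _ h))
          (Nat.one_le_iff_ne_zero.2 hk0) hk.2]
        exact ⟨fun h => ⟨hprev, Or.inr h⟩, fun h => h.2.resolve_left hk0⟩
    · exact iff_of_false (fun h => hprev ((ih hf.1 hk.1).1 (removeKSmallest_subset _ _ _ h)))
        (fun h => hprev h.1)

end Pruning

section Conformal

variable {α : ℝ} {N0 : ℕ}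

lemma conformalN_succ (α : ℝ) (N0 l : ℕ) :
    conformalN α N0 (l + 1) = conformalN α N0 l - conformalK α N0 (l + 1) := rfl

lemma conformalK_succ_le (hα : α < 1) (l : ℕ) : conformalK α N0 (l + 1) ≤ conformalN α N0 l :=
  Nat.lt_succ_iff.1 <| (Nat.floor_lt' (Nat.succ_ne_zero _)).2 <| by
    push_cast
    exact mul_lt_of_lt_one_left (by positivity) hα

theorem one_sub_pow_mul_le_conformalN (hα₀ : 0 ≤ α) (hα₁ : α < 1) (l : ℕ) :
    (1 - α) ^ l * ((N0 : ℝ) + 1) ≤ conformalN α N0 l + 1 := by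
  induction l with
  | zero => simp [conformalN]
  | succ l ih =>
    have hK : (conformalK α N0 (l + 1) : ℝ) ≤ α * (conformalN α N0 l + 1) :=
      Nat.floor_le (by positivity)
    rw [conformalN_succ, Nat.cast_sub (conformalK_succ_le hα₁ l), pow_succ]
    nlinarith

lemma card_pruneSeq_conformalK {ι : Type*} [Fintype ι] [LinearOrder ι] (hα : α < 1)
    (f : ℕ → ι → ℝ) {c : ℕ} (hc : Fintype.card ι = N0 + c) (l : ℕ) :
    (pruneSeq f (conformalK α N0) l).card = conformalN α N0 l + c := by
  rw [pruneSeq_eq_pruneFrom]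
  refine card_pruneFrom (N := fun l => conformalN α N0 l + c) hc fun m => ?_
  have := conformalK_succ_le (N0 := N0) hα m
  rw [conformalN_succ]
  omega

end Conformal

section Transfer

variable {k : ℕ → ℕ} {l : ℕ}

lemma mem_pruneSeq_comp_perm {ι : Type*} [Fintype ι] [LinearOrder ι] (τ : Equiv.Perm ι)
    {f : ℕ → ι → ℝ} (hf : ∀ m < l, Function.Injective (f (m + 1))) (i : ι) :
    i ∈ pruneSeq (fun m j => f m (τ j)) k l ↔ τ i ∈ pruneSeq f k l := by
  rw [pruneSeq_eq_pruneFrom, pruneSeq_eq_pruneFrom]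
  conv_rhs => rw [← Finset.map_univ_equiv τ, pruneFrom_map τ.toEmbedding _ hf]
  exact Finset.mem_map' _ |>.symm

theorem mem_pruneSeq_last_iff {n : ℕ} {f : ℕ → Fin (n + 1) → ℝ}
    (hf : ∀ m < l, Function.Injective (f (m + 1)))
    (hk : ∀ m < l, k (m + 1) ≤ (pruneSeq (fun m (i : Fin n) => f m i.castSucc) k m).card) :
    Fin.last n ∈ pruneSeq f k l ↔ ∀ m < l, k (m + 1) = 0 ∨
      kthSmallestVal (pruneSeq (fun m (i : Fin n) => f m i.castSucc) k m)
        (fun i => f (m + 1) i.castSucc) (k (m + 1)) ≤ f (m + 1) (Fin.last n) := by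
  have hcal : ∀ m ≤ l, pruneFrom (Finset.univ.map Fin.castSuccEmb) f k m =
      (pruneSeq (fun m (i : Fin n) => f m i.castSucc) k m).map Fin.castSuccEmb := fun m hm => by
    rw [pruneFrom_map _ _ fun j hj => hf j (by omega), pruneSeq_eq_pruneFrom]
    rfl
  rw [pruneSeq_eq_pruneFrom, Fin.univ_castSuccEmb, Finset.cons_eq_insert,
    mem_pruneFrom_insert_iff (by simp) hf fun m hm => by
      rw [hcal m hm.le, Finset.card_map]; exact hk m hm]
  refine forall₂_congr fun m hm => ?_
  rw [hcal m hm.le, kthSmallestVal_map]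
  rfl

end Transfer

section Exchangeable

variable {ι E : Type*} [Fintype ι] [MeasurableSpace E] {μ : Measure E}

lemma measurePreserving_comp_perm [SigmaFinite μ] (τ : Equiv.Perm ι) :
    MeasurePreserving (fun (v : ι → E) j => v (τ j)) (Measure.pi fun _ => μ)
      (Measure.pi fun _ => μ) := by
  convert measurePreserving_piCongrLeft (fun _ : ι => μ) τ.symm using 1
  funext v j
  simpa using (MeasurableEquiv.piCongrLeft_apply_apply (β := fun _ : ι => E) τ.symm v (τ j)).symm

lemma sum_measure_mem_eq_card [IsProbabilityMeasure μ] {S : (ι → E) → Finset ι} {c : ℕ}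
    (hS : ∀ i, MeasurableSet {v | i ∈ S v}) (hcard : ∀ v, (S v).card = c) :
    ∑ i, (Measure.pi fun _ => μ) {v | i ∈ S v} = c := by
  classical
  calc ∑ i, (Measure.pi fun _ => μ) {v | i ∈ S v}
      = ∫⁻ v, ∑ i, {v | i ∈ S v}.indicator 1 v ∂(Measure.pi fun _ => μ) := by
        rw [lintegral_finsetSum _ fun i _ => measurable_one.indicator (hS i)]
        simp only [lintegral_indicator_one (hS _)]
    _ = c := by simp [Set.indicator_apply, hcard]

theorem measure_mem_eq_div_card [IsProbabilityMeasure μ] {S : (ι → E) → Finset ι} {c : ℕ}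
    (hS : ∀ i, MeasurableSet {v | i ∈ S v})
    (hequiv : ∀ τ : Equiv.Perm ι, ∀ᵐ v ∂(Measure.pi fun _ => μ),
      ∀ i, i ∈ S (fun j => v (τ j)) ↔ τ i ∈ S v)
    (hcard : ∀ v, (S v).card = c) (i : ι) :
    (Measure.pi fun _ => μ) {v | i ∈ S v} = c / Fintype.card ι := by
  classical
  have hsame : ∀ j,
      (Measure.pi fun _ => μ) {v | j ∈ S v} = (Measure.pi fun _ => μ) {v | i ∈ S v} := by
    intro j
    let τ := Equiv.swap i j
    rw [← (measurePreserving_comp_perm (μ := μ) τ).measure_preimage (hS j).nullMeasurableSet]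
    refine measure_congr (Filter.eventuallyEq_set.2 ?_)
    filter_upwards [hequiv τ] with v hv
    change j ∈ S (fun k => v (τ k)) ↔ i ∈ S v
    rw [hv j, Equiv.swap_apply_right]
  have hsum := sum_measure_mem_eq_card (μ := μ) hS hcard
  rw [Finset.sum_congr rfl fun j _ => hsame j, Finset.sum_const, Finset.card_univ,
    nsmul_eq_mul] at hsum
  rw [ENNReal.eq_div_iff (by simpa using (Fintype.card_pos_iff.2 ⟨i⟩).ne') (by simp), hsum]

end Exchangeable

lemma forall_mem_Icc_one_iff {L : ℕ} {p : ℕ → Prop} :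
    (∀ l ∈ Finset.Icc 1 L, p l) ↔ ∀ m < L, p (m + 1) := by
  refine ⟨fun h m hm => h _ (Finset.mem_Icc.2 ⟨by omega, by omega⟩), fun h l hl => ?_⟩
  obtain ⟨h1, h2⟩ := Finset.mem_Icc.1 hl
  simpa [Nat.sub_add_cancel h1] using h (l - 1) (by omega)

section ScorePruning

variable {ι E : Type*} [Fintype ι] [LinearOrder ι] [MeasurableSpace E] {σ : ℕ → E → ℝ}
  {k : ℕ → ℕ} {l : ℕ}

theorem measurableSet_mem_pruneSeq (hσ : ∀ m < l, Measurable (σ (m + 1))) (i : ι) :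
    MeasurableSet {v : ι → E | i ∈ pruneSeq (fun m j => σ m (v j)) k l} := by
  classical
  induction l generalizing i with
  | zero => simp [pruneSeq]
  | succ l ih =>
    rw [Nat.forall_lt_succ_right] at hσ
    let Φ : (ι → E) → (ι → Prop) × (ι → ι → Prop) := fun v =>
      (fun j => j ∈ pruneSeq (fun m j => σ m (v j)) k l,
        fun i j => σ (l + 1) (v j) < σ (l + 1) (v i) ∨ (σ (l + 1) (v j) = σ (l + 1) (v i) ∧ j ≤ i))
    have hΦ : Measurable Φ := by
      refine (measurable_pi_iff.2 fun j => measurableSet_setOfPred.1 (ih hσ.1 j)).prodMk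
        (measurable_pi_iff.2 fun i => measurable_pi_iff.2 fun j => measurableSet_setOfPred.1 ?_)
      have hσj : Measurable fun v : ι → E => σ (l + 1) (v j) := hσ.2.comp (measurable_pi_apply j)
      have hσi : Measurable fun v : ι → E => σ (l + 1) (v i) := hσ.2.comp (measurable_pi_apply i)
      exact (measurableSet_lt hσj hσi).union ((measurableSet_eq_fun hσj hσi).inter (.const _))
    have : {v : ι → E | i ∈ pruneSeq (fun m j => σ m (v j)) k (l + 1)} =
        Φ ⁻¹' {x | x.1 i ∧ k (l + 1) < ((Finset.univ.filter x.1).filter (x.2 i)).card} := by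
      ext v
      simp [pruneSeq, removeKSmallest, Φ]
    rw [this]
    exact hΦ (Set.toFinite _).measurableSet

end ScorePruning

lemma ProbabilityTheory.IndepFun.measure_eq_eq_zero {Ω : Type*} [MeasurableSpace Ω]
    {P : Measure Ω} [IsFiniteMeasure P] {Y Z : Ω → ℝ} (hind : IndepFun Y Z P)
    (hY : Measurable Y) (hZ : Measurable Z) [NullSingletonClass (P.map Z)] :
    P {ω | Y ω = Z ω} = 0 := by
  have hdiag : MeasurableSet {p : ℝ × ℝ | p.1 = p.2} :=
    measurableSet_eq_fun measurable_fst measurable_snd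
  change P ((fun ω => (Y ω, Z ω)) ⁻¹' {p : ℝ × ℝ | p.1 = p.2}) = 0
  rw [← Measure.map_apply (hY.prodMk hZ) hdiag,
    (indepFun_iff_map_prod_eq_prod_map_map hY.aemeasurable hZ.aemeasurable).1 hind,
    Measure.prod_apply hdiag]
  simp [Set.preimage, measure_singleton]

lemma ProbabilityTheory.iIndepFun.map_fun_eq_pi {Ω ι E : Type*} [MeasurableSpace Ω]
    [MeasurableSpace E] [Fintype ι] {P : Measure Ω} [IsProbabilityMeasure P] {X : ι → Ω → E}
    {μ : Measure E} (hind : iIndepFun X P) (hX : ∀ i, Measurable (X i))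
    (hlaw : ∀ i, P.map (X i) = μ) :
    P.map (fun ω i => X i ω) = Measure.pi fun _ => μ := by
  rw [(iIndepFun_iff_map_fun_eq_pi_map fun i => (hX i).aemeasurable).1 hind]
  simp [hlaw]

section Ties

variable {ι E : Type*} [Fintype ι] [MeasurableSpace E] {μ : Measure E} [IsProbabilityMeasure μ]

theorem ae_injective_comp_of_nullSingletonClass {g : E → ℝ} (hg : Measurable g)
    [NullSingletonClass (μ.map g)] :
    ∀ᵐ v ∂(Measure.pi fun _ : ι => μ), Function.Injective fun i => g (v i) := by
  have hindep : iIndepFun (fun i (v : ι → E) => g (v i)) (Measure.pi fun _ => μ) :=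
    iIndepFun_pi fun _ => hg.aemeasurable
  have hmeas : ∀ j, Measurable fun v : ι → E => g (v j) := fun j => hg.comp (measurable_pi_apply j)
  have hlaw : ∀ j, (Measure.pi fun _ : ι => μ).map (fun v => g (v j)) = μ.map g := fun j => by
    conv_rhs => rw [← (measurePreserving_eval (fun _ : ι => μ) j).map_eq]
    rw [Measure.map_map hg (measurable_pi_apply j)]
    rfl
  have hpair : ∀ i j, ∀ᵐ v ∂(Measure.pi fun _ : ι => μ), i ≠ j → g (v i) ≠ g (v j) := by
    intro i j
    by_cases hij : i = j
    · exact Filter.Eventually.of_forall fun _ h => absurd hij h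
    have : NullSingletonClass ((Measure.pi fun _ : ι => μ).map (fun v => g (v j))) :=
      hlaw j ▸ inferInstance
    filter_upwards [measure_eq_zero_iff_ae_notMem.1
      ((hindep.indepFun hij).measure_eq_eq_zero (hmeas i) (hmeas j))] with v hv _
    exact hv
  filter_upwards [ae_all_iff.2 fun i => ae_all_iff.2 (hpair i)] with v hv i j
  exact not_imp_not.1 (hv i j)

end Ties

lemma ite_bot_le_coe_iff {p : Prop} [Decidable p] {t x : ℝ} :
    (if p then (⊥ : EReal) else (t : EReal)) ≤ (x : EReal) ↔ p ∨ t ≤ x := by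
  split_ifs with h <;> simp [h]

theorem dynamic_conformal_beam_coverage_general
    {Ω E : Type*} [MeasurableSpace Ω] [MeasurableSpace E]
    (P : Measure Ω) [IsProbabilityMeasure P]
    (N0 : ℕ)
    (X : Fin (N0 + 1) → Ω → E)
    (hXmeas : ∀ i, Measurable (X i))
    (hXindep : iIndepFun X P)
    (μ : Measure E) (hXlaw : ∀ i, P.map (X i) = μ)
    (α : ℝ) (hα : α ∈ Set.Ioo (0 : ℝ) 1)
    (L : ℕ)
    (σ : ℕ → E → ℝ)
    (hσmeas : ∀ l ∈ Finset.Icc 1 L, Measurable (σ l))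
    (hatomless : ∀ l ∈ Finset.Icc 1 L, NoAtoms (μ.map (σ l))) :
    (1 - α) ^ L ≤
      (P {ω | ∀ l ∈ Finset.Icc 1 L,
        (if conformalK α N0 l = 0 then (⊥ : EReal) else
          ((kthSmallestVal
              (pruneSeq (fun m (i : Fin N0) => σ m (X i.castSucc ω)) (conformalK α N0) (l - 1))
              (fun (i : Fin N0) => σ l (X i.castSucc ω)) (conformalK α N0 l) : ℝ) : EReal))
          ≤ ((σ l (X (Fin.last N0) ω) : ℝ) : EReal)}).toReal := by
  rw [forall_mem_Icc_one_iff] at hσmeas hatomless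
  have : IsProbabilityMeasure μ :=
    hXlaw 0 ▸ Measure.isProbabilityMeasure_map (hXmeas 0).aemeasurable
  let Y : Ω → Fin (N0 + 1) → E := fun ω i => X i ω
  have hY : Measurable Y := measurable_pi_lambda _ hXmeas
  have hlaw : P.map Y = Measure.pi fun _ => μ := hXindep.map_fun_eq_pi hXmeas hXlaw
  have htiefree : ∀ᵐ v ∂(Measure.pi fun _ => μ), ∀ m < L,
      Function.Injective fun i : Fin (N0 + 1) => σ (m + 1) (v i) :=
    (Filter.eventually_all_finite (Set.finite_Iio L)).2 fun m hm => by
      have : NullSingletonClass (μ.map (σ (m + 1))) := hatomless m hm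
      exact ae_injective_comp_of_nullSingletonClass (hσmeas m hm)
  let A := {v : Fin (N0 + 1) → E |
    Fin.last N0 ∈ pruneSeq (fun m j => σ m (v j)) (conformalK α N0) L}
  have hπA : (Measure.pi fun _ => μ) A = (conformalN α N0 L + 1 : ℕ) / (N0 + 1 : ℕ) := by
    simpa using measure_mem_eq_div_card (measurableSet_mem_pruneSeq hσmeas)
      (fun τ => htiefree.mono fun v hv => mem_pruneSeq_comp_perm τ (f := fun m j => σ m (v j)) hv)
      (fun v => card_pruneSeq_conformalK (N0 := N0) (c := 1) hα.2 _ (by simp) L) (Fin.last N0)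
  rw [measure_congr (t := Y ⁻¹' A) (Filter.eventuallyEq_set.2 ?_),
    ← Measure.map_apply hY (measurableSet_mem_pruneSeq hσmeas _), hlaw, hπA, ENNReal.toReal_div,
    ENNReal.toReal_natCast, ENNReal.toReal_natCast, le_div_iff₀ (by positivity)]
  · exact_mod_cast one_sub_pow_mul_le_conformalN hα.1.le hα.2 L
  filter_upwards [ae_of_ae_map hY.aemeasurable (hlaw ▸ htiefree)] with ω hω
  simp only [Set.mem_ofPred_eq, Set.mem_preimage, A, forall_mem_Icc_one_iff,
    Nat.add_sub_cancel, ite_bot_le_coe_iff]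
  refine (mem_pruneSeq_last_iff (f := fun m i => σ m (X i ω)) hω fun m _ => ?_).symm
  rw [card_pruneSeq_conformalK (N0 := N0) (c := 0) hα.2 _ (by simp) m]
  exact conformalK_succ_le hα.2 m

/-- **Dynamic conformal beam coverage guarantee** (Proposition 2).
Given i.i.d. samples `X 1, …, X N₀, X (N₀+1)` with law `μ`, per-step scores `σ l` with atomless
pushforwards, and the iteratively calibrated thresholds
`t_l = (k_l)`-th smallest of `σ l` on `W_{l-1}` (with `t_l = ⊥` if `k_l = 0`, where
`k_l = ⌊α(N_{l-1}+1)⌋`, `N_l = N_{l-1} - k_l`), the probability that the fresh sample passes all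
`L` thresholds is at least `(1-α)^L`. -/
theorem dynamic_conformal_beam_coverage
    {Ω E : Type*} [MeasurableSpace Ω] [MeasurableSpace E]
    (P : Measure Ω) [IsProbabilityMeasure P]
    (N0 : ℕ) (hN0 : 0 < N0)
    (X : Fin (N0 + 1) → Ω → E)
    (hXmeas : ∀ i, Measurable (X i))
    (hXindep : iIndepFun X P)
    (μ : Measure E) (hXlaw : ∀ i, P.map (X i) = μ)
    (α : ℝ) (hα : α ∈ Set.Ioo (0 : ℝ) 1)
    (L : ℕ) (hL : 0 < L)
    (σ : ℕ → E → ℝ)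
    (hσmeas : ∀ l ∈ Finset.Icc 1 L, Measurable (σ l))
    (hatomless : ∀ l ∈ Finset.Icc 1 L, NoAtoms (μ.map (σ l))) :
    (1 - α) ^ L ≤
      (P {ω | ∀ l ∈ Finset.Icc 1 L,
        (if conformalK α N0 l = 0 then (⊥ : EReal) else
          ((kthSmallestVal
              (pruneSeq (fun m (i : Fin N0) => σ m (X i.castSucc ω)) (conformalK α N0) (l - 1))
              (fun (i : Fin N0) => σ l (X i.castSucc ω)) (conformalK α N0 l) : ℝ) : EReal))
          ≤ ((σ l (X (Fin.last N0) ω) : ℝ) : EReal)}).toReal :=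
  dynamic_conformal_beam_coverage_general P N0 X hXmeas hXindep μ hXlaw α hα L σ hσmeas hatomless

end
end

section
/- Let n be a positive integer, p ∈ (0,1), δ ∈ (0,1), and let X be a random variable with the binomial distribution with parameters n and p. For an integer k with 1 ≤ k ≤ n, define q(k) ∈ (0,1) as the unique solution q of [n!/((k−1)!(n−k)!)] ∫₀^q t^{k−1}(1−t)^{n−k} dt = δ (the δ-quantile of the Beta(k, n+1−k) distribution), and set q(0) = 0. Then P( q(X) ≤ p ) ≥ 1 − δ. -/
/-!
The upper binomial tail `x ↦ P(Bin(n, x) ≥ k)` is a sum of Bernstein polynomials whose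
derivative telescopes to `n • B_{n-1,k-1}`; hence, for `1 ≤ k ≤ n`, it equals the
`Beta(k, n + 1 - k)` distribution function and is increasing on `[0, 1]`. If `k₀` is the least
`k ≤ n` with `p < q k` (necessarily `k₀ ≥ 1` since `q 0 = 0`), then almost surely
`p < q X` forces `k₀ ≤ X ≤ n`, an event of probability equal to the tail at `p`, which is at most
the tail at `q k₀`, i.e. `δ`.
-/

open MeasureTheory ProbabilityTheory Finset Polynomial Nat

theorem derivative_sum_bernsteinPolynomial_Ico {R : Type*} [CommRing R] {n ν : ℕ} (hν : ν ≤ n) :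
    derivative (∑ j ∈ Ico (ν + 1) (n + 1), bernsteinPolynomial R n j) =
      n * bernsteinPolynomial R (n - 1) ν := by
  have htop : (n : R[X]) * bernsteinPolynomial R (n - 1) n = 0 := by
    rcases n.eq_zero_or_pos with rfl | hn
    · simp
    · rw [bernsteinPolynomial.eq_zero_of_lt R (by omega), mul_zero]
  rw [derivative_sum, ← sum_Ico_add' (fun j => derivative (bernsteinPolynomial R n j))]
  simp only [bernsteinPolynomial.derivative_succ, ← mul_sum]
  simp_rw [← neg_sub (bernsteinPolynomial R (n - 1) (_ + 1))]
  rw [sum_neg_distrib, sum_Ico_sub (fun j => bernsteinPolynomial R (n - 1) j) hν]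
  linear_combination -htop

theorem sum_choose_mul_pow_Ico_eq_integral {n k : ℕ} (hk : 1 ≤ k) (hkn : k ≤ n) (x : ℝ) :
    ∑ j ∈ Ico k (n + 1), (n.choose j : ℝ) * x ^ j * (1 - x) ^ (n - j) =
      (n ! / ((k - 1)! * (n - k)!) : ℝ) * ∫ t in (0 : ℝ)..x, t ^ (k - 1) * (1 - t) ^ (n - k) := by
  obtain ⟨ν, rfl⟩ : ∃ ν, k = ν + 1 := ⟨k - 1, by omega⟩
  obtain ⟨m, rfl⟩ : ∃ m, n = m + 1 := ⟨n - 1, by omega⟩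
  set F := ∑ j ∈ Ico (ν + 1) (m + 1 + 1), bernsteinPolynomial ℝ (m + 1) j
  have hF : ∀ y : ℝ, F.eval y =
      ∑ j ∈ Ico (ν + 1) (m + 1 + 1), ((m + 1).choose j : ℝ) * y ^ j * (1 - y) ^ (m + 1 - j) := by
    intro y
    simp [F, eval_finsetSum, bernsteinPolynomial]
  have hF0 : F.eval 0 = 0 := by
    simp only [F, eval_finsetSum, bernsteinPolynomial.eval_at_0]
    exact sum_eq_zero fun j hj => if_neg (by grind)
  have hconst : ((m + 1 : ℕ) : ℝ) * (m.choose ν) = (m + 1)! / (ν ! * (m - ν)!) := by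
    rw [Nat.cast_choose ℝ (by omega), Nat.factorial_succ]; push_cast; ring
  have hFTC := intervalIntegral.integral_eq_sub_of_hasDerivAt (a := 0) (b := x)
    (fun t _ => F.hasDerivAt t) (F.derivative.continuous.intervalIntegrable _ _)
  rw [hF0, sub_zero, hF, derivative_sum_bernsteinPolynomial_Ico (by omega)] at hFTC
  rw [← hFTC, ← intervalIntegral.integral_const_mul]
  congr 1 with t
  simp only [eval_mul, eval_natCast, bernsteinPolynomial, eval_pow, eval_sub, eval_one, eval_X,
    add_tsub_cancel_right, Nat.add_sub_add_right]
  rw [← hconst]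
  ring

theorem monotoneOn_sum_choose_mul_pow_Ico {n k : ℕ} (hk : 1 ≤ k) (hkn : k ≤ n) :
    MonotoneOn (fun x : ℝ => ∑ j ∈ Ico k (n + 1), (n.choose j : ℝ) * x ^ j * (1 - x) ^ (n - j))
      (Set.Icc 0 1) := by
  intro x hx y hy hxy
  simp only [sum_choose_mul_pow_Ico_eq_integral hk hkn]
  gcongr
  refine intervalIntegral.integral_mono_interval le_rfl hx.1 hxy ?_
    (Continuous.intervalIntegrable (by fun_prop) _ _)
  filter_upwards [ae_restrict_mem measurableSet_Ioc] with t ht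
  have ht₀ : 0 ≤ t := ht.1.le
  have ht₁ : 0 ≤ 1 - t := by linarith [ht.2, hy.2]
  positivity

theorem sum_choose_mul_pow_filter_lt_quantile_le {n : ℕ} {p δ : ℝ} (hp : p ∈ Set.Icc (0 : ℝ) 1)
    (hδ : 0 ≤ δ) {q : ℕ → ℝ} (hq0 : q 0 = 0)
    (hq : ∀ k : ℕ, 1 ≤ k → k ≤ n → q k ≤ 1 ∧
      (n ! / ((k - 1)! * (n - k)!) : ℝ) * ∫ t in (0 : ℝ)..(q k), t ^ (k - 1) * (1 - t) ^ (n - k) = δ) :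
    ∑ k ∈ (range (n + 1)).filter (p < q ·), (n.choose k : ℝ) * p ^ k * (1 - p) ^ (n - k) ≤ δ := by
  have h0p : 0 ≤ p := hp.1
  have h1p : 0 ≤ 1 - p := sub_nonneg.2 hp.2
  set A := (range (n + 1)).filter (p < q ·)
  rcases A.eq_empty_or_nonempty with hA | hA
  · simpa [hA] using hδ
  have hk₀ := mem_filter.1 (A.min'_mem hA)
  set k₀ := A.min' hA
  have hk₀n : k₀ ≤ n := Nat.lt_succ_iff.1 (mem_range.1 hk₀.1)
  have hk₀pos : 1 ≤ k₀ := Nat.one_le_iff_ne_zero.2 fun h => by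
    rw [h, hq0] at hk₀
    linarith [hk₀.2]
  obtain ⟨hqk₀, hδk₀⟩ := hq k₀ hk₀pos hk₀n
  have hsub : A ⊆ Ico k₀ (n + 1) := fun k hk =>
    mem_Ico.2 ⟨A.min'_le k hk, mem_range.1 (mem_filter.1 hk).1⟩
  calc ∑ k ∈ A, (n.choose k : ℝ) * p ^ k * (1 - p) ^ (n - k)
      ≤ ∑ k ∈ Ico k₀ (n + 1), (n.choose k : ℝ) * p ^ k * (1 - p) ^ (n - k) :=
        sum_le_sum_of_subset_of_nonneg hsub fun j _ _ => by positivity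
    _ ≤ ∑ k ∈ Ico k₀ (n + 1), (n.choose k : ℝ) * q k₀ ^ k * (1 - q k₀) ^ (n - k) :=
        monotoneOn_sum_choose_mul_pow_Ico hk₀pos hk₀n hp ⟨h0p.trans hk₀.2.le, hqk₀⟩ hk₀.2.le
    _ = δ := by rw [sum_choose_mul_pow_Ico_eq_integral hk₀pos hk₀n, hδk₀]

theorem ae_le_of_forall_lt_measure_eq_zero {Ω : Type*} [MeasurableSpace Ω] {P : Measure Ω}
    {X : Ω → ℕ} {n : ℕ} (h : ∀ j, n < j → P {ω | X ω = j} = 0) : ∀ᵐ ω ∂P, X ω ≤ n := by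
  refine measure_mono_null (fun ω hω => Set.mem_iUnion.2 ⟨X ω - (n + 1), ?_⟩)
    (measure_iUnion_null fun j => h (n + 1 + j) (by omega))
  have : n < X ω := not_le.1 hω
  show X ω = n + 1 + (X ω - (n + 1))
  omega

theorem clopper_pearson_lower_bound_general
    {Ω : Type*} [MeasurableSpace Ω] (P : Measure Ω) [IsProbabilityMeasure P]
    (n : ℕ)
    (p : ℝ) (hp : p ∈ Set.Ioo (0 : ℝ) 1)
    (δ : ℝ) (hδ : δ ∈ Set.Ioo (0 : ℝ) 1)
    -- `X` has the binomial distribution with parameters `n` and `p`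
    (X : Ω → ℕ) (hXmeas : Measurable X)
    (hX : ∀ j : ℕ, (P {ω | X ω = j}).toReal = (n.choose j : ℝ) * p ^ j * (1 - p) ^ (n - j))
    -- `q k` is the `δ`-quantile of the `Beta(k, n+1-k)` distribution, and `q 0 = 0`
    (q : ℕ → ℝ) (hq0 : q 0 = 0)
    (hq : ∀ k : ℕ, 1 ≤ k → k ≤ n → q k ∈ Set.Ioo (0 : ℝ) 1 ∧
      ((Nat.factorial n : ℝ) / (Nat.factorial (k - 1) * Nat.factorial (n - k))) *
        ∫ t in (0 : ℝ)..(q k), t ^ (k - 1) * (1 - t) ^ (n - k) = δ) :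
    1 - δ ≤ (P {ω | q (X ω) ≤ p}).toReal := by
  set A := (range (n + 1)).filter (p < q ·)
  have hXle : ∀ᵐ ω ∂P, X ω ≤ n := ae_le_of_forall_lt_measure_eq_zero fun j hj =>
    (measureReal_eq_zero_iff).1 (by simp [measureReal_def, hX j, Nat.choose_eq_zero_of_lt hj])
  have hcompl : {ω | q (X ω) ≤ p}ᶜ =ᵐ[P] X ⁻¹' A := by
    filter_upwards [hXle] with ω hω
    simp only [A, coe_filter, mem_range]
    exact propext ⟨fun h => ⟨Nat.lt_succ_of_le hω, not_le.1 h⟩, fun h => not_le.2 h.2⟩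
  have hPA : P.real (X ⁻¹' A) = ∑ k ∈ A, (n.choose k : ℝ) * p ^ k * (1 - p) ^ (n - k) := by
    rw [← sum_measureReal_preimage_singleton A fun k _ => hXmeas (measurableSet_singleton k)]
    exact sum_congr rfl fun k _ => hX k
  have hE : P.real {ω | q (X ω) ≤ p}ᶜ = 1 - P.real {ω | q (X ω) ≤ p} :=
    probReal_compl_eq_one_sub (hXmeas (t := {k | q k ≤ p}) .of_discrete)
  have hEc : P.real {ω | q (X ω) ≤ p}ᶜ = _ := (measureReal_congr hcompl).trans hPA
  have hA := sum_choose_mul_pow_filter_lt_quantile_le (Set.Ioo_subset_Icc_self hp) hδ.1.le hq0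
    fun k hk hkn => ⟨(hq k hk hkn).1.2.le, (hq k hk hkn).2⟩
  rw [← measureReal_def]
  linarith

/-- **Clopper–Pearson one-sided lower confidence bound for a binomial proportion.**
If `X ~ Bin(n, p)` with `p ∈ (0,1)`, `δ ∈ (0,1)`, and `q k` is the `δ`-quantile of the
`Beta(k, n+1-k)` distribution for `1 ≤ k ≤ n` (with `q 0 = 0`), then the random lower bound
`q X` lies below `p` with probability at least `1 - δ`. -/
theorem clopper_pearson_lower_bound
    {Ω : Type*} [MeasurableSpace Ω] (P : Measure Ω) [IsProbabilityMeasure P]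
    (n : ℕ) (hn : 0 < n)
    (p : ℝ) (hp : p ∈ Set.Ioo (0 : ℝ) 1)
    (δ : ℝ) (hδ : δ ∈ Set.Ioo (0 : ℝ) 1)
    -- `X` has the binomial distribution with parameters `n` and `p`
    (X : Ω → ℕ) (hXmeas : Measurable X)
    (hX : ∀ j : ℕ, (P {ω | X ω = j}).toReal = (n.choose j : ℝ) * p ^ j * (1 - p) ^ (n - j))
    -- `q k` is the `δ`-quantile of the `Beta(k, n+1-k)` distribution, and `q 0 = 0`
    (q : ℕ → ℝ) (hq0 : q 0 = 0)
    (hq : ∀ k : ℕ, 1 ≤ k → k ≤ n → q k ∈ Set.Ioo (0 : ℝ) 1 ∧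
      ((Nat.factorial n : ℝ) / (Nat.factorial (k - 1) * Nat.factorial (n - k))) *
        ∫ t in (0 : ℝ)..(q k), t ^ (k - 1) * (1 - t) ^ (n - k) = δ) :
    1 - δ ≤ (P {ω | q (X ω) ≤ p}).toReal :=
  clopper_pearson_lower_bound_general P n p hp δ hδ X hXmeas hX q hq0 hq
end
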